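/- arXiv:1708.03971 — 5 statements merged into one kernel-verified Lean document; each statement's English description precedes it below -/
import Mathlib

section
/- Let F be a nonzero homogeneous real polynomial of degree m ≥ 1 in three variables. Then the set H(F) ⊆ ℝ³ of hyperbolicity directions of F is closed in ℝ³ and is invariant under multiplication by real scalars (it is a closed cone). (This is the cone version of the paper's claim that hyp(C) is a closed subset of ℝP².) -/
/-- The univariate real polynomial `t ↦ F(x + t·e)`. -/
noncomputable def linePoly (F : MvPolynomial (Fin 3) ℝ) (x e : Fin 3 → ℝ) : Polynomial ℝ :=
  MvPolynomial.aeval (fun i => Polynomial.C (x i) + Polynomial.C (e i) * Polynomial.X) F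

/-- `e` is a hyperbolicity direction of `F` if for every `x` the polynomial
`t ↦ F(x + t·e)` splits over `ℝ`. -/
def IsHypDir (F : MvPolynomial (Fin 3) ℝ) (e : Fin 3 → ℝ) : Prop :=
  ∀ x : Fin 3 → ℝ, (linePoly F x e).Splits

/-!
For a real-rooted `g`, the Mahler measure of `g` is `|lc g| ∏ max 1 |rⱼ|`, which is at most
`|g(i)| = |lc g| ∏ √(1 + rⱼ²)`; since coefficients are bounded by binomial coefficients times the
Mahler measure, `|gₛ| ≤ C(d, s) |g(i)|` whenever `deg g ≤ d`. Applied to the line polynomials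
`t ↦ F(x + t b e)`, whose degree is bounded independently of `e`, this is a family of closed
conditions on `e`. Conversely, if they all hold and `t ↦ F(x + t e)` had a non-real root `a + b i`,
then `t ↦ F(x + a e + t b e)` would vanish at `i`, hence identically, and so would `t ↦ F(x + t e)`.
Invariance under scaling is the fact that `t ↦ F(x + t c e)` is `t ↦ F(x + t e)` composed with
`t ↦ c t`.
-/

open Polynomial

namespace Polynomial

theorem Splits.mahlerMeasure_map_le_norm_aeval_I {f : ℝ[X]} (hf : f.Splits) :
    (f.map (algebraMap ℝ ℂ)).mahlerMeasure ≤ ‖aeval Complex.I f‖ := by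
  induction hf using Submonoid.closure_induction with
  | mem g hg =>
    rcases hg with ⟨a, rfl⟩ | ⟨a, rfl⟩
    · simp
    · simp only [Polynomial.map_add, map_X, map_C, mahlerMeasure_X_add_C, map_add, aeval_X,
        aeval_C, Complex.coe_algebraMap, Complex.norm_real, Real.norm_eq_abs]
      refine max_le ?_ ?_
      · simpa using Complex.abs_im_le_norm (Complex.I + a)
      · simpa using Complex.abs_re_le_norm (Complex.I + a)
  | one => simp
  | mul f g _ _ hf hg =>
    simp only [Polynomial.map_mul, mahlerMeasure_mul, map_mul, norm_mul]
    exact mul_le_mul hf hg (mahlerMeasure_nonneg _) (norm_nonneg _)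

theorem Splits.abs_coeff_le_choose_mul_norm_aeval_I {f : ℝ[X]} (hf : f.Splits) {d : ℕ}
    (hd : f.natDegree ≤ d) (s : ℕ) : |f.coeff s| ≤ d.choose s * ‖aeval Complex.I f‖ := by
  have hcoeff := norm_coeff_le_choose_mul_mahlerMeasure s (f.map (algebraMap ℝ ℂ))
  rw [coeff_map, natDegree_map, Complex.coe_algebraMap, Complex.norm_real,
    Real.norm_eq_abs] at hcoeff
  calc |f.coeff s| ≤ f.natDegree.choose s * (f.map (algebraMap ℝ ℂ)).mahlerMeasure := hcoeff
    _ ≤ d.choose s * ‖aeval Complex.I f‖ := by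
      gcongr
      · exact mahlerMeasure_nonneg _
      · exact hf.mahlerMeasure_map_le_norm_aeval_I

theorem splits_of_forall_aeval_I_comp_eq_zero {f : ℝ[X]}
    (h : ∀ a b : ℝ, aeval Complex.I (f.comp (C b * X + C a)) = 0 → f.comp (C b * X + C a) = 0) :
    f.Splits := by
  refine Splits.of_splits_map (algebraMap ℝ ℂ) (IsAlgClosed.splits _) fun z hz => ?_
  have hf : f ≠ 0 := by rintro rfl; simp at hz
  have hfz : aeval z f = 0 := by
    rwa [mem_roots (map_ne_zero hf), IsRoot, eval_map_algebraMap] at hz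
  have hz_eq : aeval Complex.I (C z.im * X + C z.re : ℝ[X]) = z := by
    simp [Complex.ext_iff]
  have hcomp := h z.re z.im (by rw [aeval_comp, hz_eq, hfz])
  rcases comp_eq_zero_iff.mp hcomp with hf0 | ⟨-, hconst⟩
  · exact absurd hf0 hf
  · have him : z.im = 0 := by simpa using congr_arg (coeff · 1) hconst
    exact ⟨z.re, Complex.ext (by simp) (by simp [him])⟩

end Polynomial

/-- `F(x + t e)` with the coordinates of `e` kept as indeterminates. -/
noncomputable def genericLinePoly (F : MvPolynomial (Fin 3) ℝ) (x : Fin 3 → ℝ) :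
    (MvPolynomial (Fin 3) ℝ)[X] :=
  MvPolynomial.aeval (fun i => C (MvPolynomial.C (x i)) + C (MvPolynomial.X i) * X) F

section LinePoly

variable (F : MvPolynomial (Fin 3) ℝ) (x : Fin 3 → ℝ)

theorem linePoly_eq_map_genericLinePoly (e : Fin 3 → ℝ) :
    linePoly F x e = (genericLinePoly F x).map (MvPolynomial.eval e) := by
  induction F using MvPolynomial.induction_on with
  | C a => simp [linePoly, genericLinePoly]
  | add p q hp hq => simp_all [linePoly, genericLinePoly]
  | mul_X p i hp => simp_all [linePoly, genericLinePoly]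

theorem natDegree_linePoly_le (e : Fin 3 → ℝ) :
    (linePoly F x e).natDegree ≤ (genericLinePoly F x).natDegree := by
  rw [linePoly_eq_map_genericLinePoly]
  exact natDegree_map_le

theorem continuous_coeff_linePoly (s : ℕ) : Continuous fun e => (linePoly F x e).coeff s := by
  simp only [linePoly_eq_map_genericLinePoly, coeff_map]
  exact MvPolynomial.continuous_eval _

theorem continuous_aeval_linePoly (z : ℂ) : Continuous fun e => aeval z (linePoly F x e) := by
  simp only [aeval_eq_sum_range' (Nat.lt_succ_of_le (natDegree_linePoly_le F x _))]
  exact continuous_finsetSum _ fun s _ => (continuous_coeff_linePoly F x s).smul continuous_const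

theorem linePoly_comp_C_mul_X_add_C (e : Fin 3 → ℝ) (a b : ℝ) :
    (linePoly F x e).comp (C b * X + C a) = linePoly F (x + a • e) (b • e) := by
  rw [linePoly, linePoly, comp_eq_aeval, ← AlgHom.comp_apply, MvPolynomial.comp_aeval]
  congr 2
  funext i
  simp only [map_add, map_mul, aeval_C, aeval_X, Pi.add_apply, Pi.smul_apply, smul_eq_mul,
    algebraMap_eq]
  ring

end LinePoly

theorem IsHypDir.smul {F : MvPolynomial (Fin 3) ℝ} {e : Fin 3 → ℝ} (he : IsHypDir F e) (c : ℝ) :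
    IsHypDir F (c • e) := fun x => by
  have hsplit := (he x).comp_of_natDegree_le_one (natDegree_linear_le (a := c) (b := 0))
  rwa [linePoly_comp_C_mul_X_add_C, zero_smul, add_zero] at hsplit

theorem isClosed_setOf_isHypDir (F : MvPolynomial (Fin 3) ℝ) :
    IsClosed {e | IsHypDir F e} := by
  have hset : {e | IsHypDir F e} = ⋂ (x) (b : ℝ) (s), {e |
      |(linePoly F x (b • e)).coeff s| ≤
        (genericLinePoly F x).natDegree.choose s * ‖aeval Complex.I (linePoly F x (b • e))‖} := by
    ext e
    simp only [Set.mem_ofPred_eq, Set.mem_iInter]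
    refine ⟨fun he x b s => ((he.smul b) x).abs_coeff_le_choose_mul_norm_aeval_I
      (natDegree_linePoly_le F x _) s, fun h x => ?_⟩
    refine splits_of_forall_aeval_I_comp_eq_zero fun a b hzero => Polynomial.ext fun s => ?_
    have hs := h (x + a • e) b s
    rw [← linePoly_comp_C_mul_X_add_C, hzero, norm_zero, mul_zero, abs_nonpos_iff] at hs
    rw [hs, coeff_zero]
  rw [hset]
  refine isClosed_iInter fun x => isClosed_iInter fun b => isClosed_iInter fun s => ?_
  exact isClosed_le ((continuous_coeff_linePoly F x s).comp (continuous_const_smul b)).abs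
    (continuous_const.mul
      ((continuous_aeval_linePoly F x _).comp (continuous_const_smul b)).norm)

theorem stmt_1_general (F : MvPolynomial (Fin 3) ℝ) :
    IsClosed {e : Fin 3 → ℝ | IsHypDir F e} ∧
      ∀ (c : ℝ) (e : Fin 3 → ℝ), IsHypDir F e → IsHypDir F (c • e) :=
  ⟨isClosed_setOf_isHypDir F, fun c _ he => he.smul c⟩

theorem stmt_1 (m : ℕ) (hm : 1 ≤ m) (F : MvPolynomial (Fin 3) ℝ) (hF : F ≠ 0)
    (hhom : F.IsHomogeneous m) :
    IsClosed {e : Fin 3 → ℝ | IsHypDir F e} ∧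
      ∀ (c : ℝ) (e : Fin 3 → ℝ), IsHypDir F e → IsHypDir F (c • e) :=
  stmt_1_general F
end

section
/- Let F be a nonzero homogeneous real polynomial of degree m ≥ 1 in three variables. If e ∈ ℝ³ is a hyperbolicity direction of F and F(e) ≠ 0, then e lies in the interior of the set H(F) of hyperbolicity directions of F; in particular H(F) has nonempty interior. (This openness statement underlies the paper's use, in Proposition 2, of the non-emptiness of the interior of hyp(C_p) for points q ∈ hyp(C) not lying on C.) -/
/-!
Gårding's argument. Let `S = {F ≠ 0}` and let `C` be the connected component of `S` containing
`e`; it is open, so it suffices that every `v ∈ C` is a hyperbolicity direction. Fix a real `x`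
and `s > 0`, and put `W = x + i s e`. Hyperbolicity of `e` says that `F` has no zero of the form
`y + z e` with `y` real and `Im z ≠ 0`. The set of `v ∈ S` for which `t ↦ F(W + t v)` has no zero
in the closed upper half-plane contains `e`, is open (the zeros stay bounded near `v` by
homogeneity, and a compactness argument applies), and is closed in `S`: by Hurwitz's theorem a
limit has no zeros with `Im t > 0`, and a real zero `τ` would be a zero `(x + τ v) + i s e`.
Hence it contains `C`. Letting `s → 0` and using Hurwitz again, `t ↦ F(x + t v)` has no zeros in
the open upper half-plane, nor, by conjugation, in the lower one, so it splits over `ℝ`.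
-/

open Polynomial Filter Topology

namespace Finsupp

variable {σ : Type*}

theorem prod_pow_eq_prod_map_toMultiset {M : Type*} [CommMonoid M] (d : σ →₀ ℕ) (g : σ → M) :
    (d.prod fun i k => g i ^ k) = (d.toMultiset.map g).prod := by
  simp [toMultiset_map, prod_toMultiset, prod_mapDomain_index, pow_add]

theorem card_toMultiset_eq_degree (d : σ →₀ ℕ) : Multiset.card (toMultiset d) = d.degree :=
  card_toMultiset d

end Finsupp

namespace Polynomial

variable {σ R : Type*} [CommSemiring R] {ℓ : σ → R[X]}

theorem natDegree_finsuppProd_pow_le (hℓ : ∀ i, (ℓ i).natDegree ≤ 1) (d : σ →₀ ℕ) :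
    (d.prod fun i k => ℓ i ^ k).natDegree ≤ d.degree := by
  rw [Finsupp.prod_pow_eq_prod_map_toMultiset, ← Finsupp.card_toMultiset_eq_degree]
  refine (natDegree_multiset_prod_le _).trans ((Multiset.sum_le_card_nsmul _ 1 ?_).trans (by simp))
  simpa using fun i _ => hℓ i

theorem coeff_finsuppProd_pow_degree (hℓ : ∀ i, (ℓ i).natDegree ≤ 1) (d : σ →₀ ℕ) :
    (d.prod fun i k => ℓ i ^ k).coeff d.degree = d.prod fun i k => (ℓ i).coeff 1 ^ k := by
  have hcoeff := coeff_multiset_prod_of_natDegree_le (d.toMultiset.map ℓ) 1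
    (by simpa using fun i _ => hℓ i)
  rw [Finsupp.prod_pow_eq_prod_map_toMultiset, Finsupp.prod_pow_eq_prod_map_toMultiset,
    ← Finsupp.card_toMultiset_eq_degree]
  simpa [Multiset.map_map] using hcoeff

theorem natDegree_C_add_C_mul_X_le (a b : R) : (C a + C b * X).natDegree ≤ 1 := by
  rw [add_comm]
  exact natDegree_linear_le

theorem Splits.norm_leadingCoeff_mul_pow_le_norm_eval {K : Type*} [NormedField K] {q : K[X]}
    (hq : q.Splits) (t : K) {ε : ℝ} (hε : 0 ≤ ε) (h : ∀ r ∈ q.roots, ε ≤ ‖t - r‖) :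
    ‖q.leadingCoeff‖ * ε ^ q.natDegree ≤ ‖q.eval t‖ := by
  rw [hq.eval_eq_prod_roots, norm_mul, hq.natDegree_eq_card_roots]
  gcongr
  calc ε ^ Multiset.card q.roots = (q.roots.map fun _ => ε).prod := by simp
    _ ≤ (q.roots.map fun r => ‖t - r‖).prod :=
      Multiset.prod_map_le_prod_map₀ _ _ (fun _ _ => hε) h
    _ = ‖(q.roots.map (t - ·)).prod‖ := by
      rw [← normHom_apply, map_multiset_prod, Multiset.map_map]
      rfl

end Polynomial

namespace MvPolynomial

section RestrictLine

variable {σ R : Type*} [CommSemiring R] {φ : MvPolynomial σ R} {m : ℕ}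

/-- `linePoly F x e` is by definition `restrictLine F x e`. -/
noncomputable def restrictLine (φ : MvPolynomial σ R) (w v : σ → R) : R[X] :=
  aeval (fun i => Polynomial.C (w i) + Polynomial.C (v i) * Polynomial.X) φ

theorem eval_restrictLine (φ : MvPolynomial σ R) (w v : σ → R) (t : R) :
    (restrictLine φ w v).eval t = eval (w + t • v) φ := by
  rw [restrictLine, ← Polynomial.coe_aeval_eq_eval, comp_aeval_apply]
  refine congrArg (fun g => eval g φ) ?_
  funext i
  simp only [Polynomial.aeval_add, Polynomial.aeval_mul, Polynomial.aeval_C, Polynomial.aeval_X,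
    Pi.add_apply, Pi.smul_apply, smul_eq_mul, Algebra.algebraMap_self, RingHom.id_apply]
  ring

theorem map_restrictLine {S : Type*} [CommSemiring S] (f : R →+* S) (φ : MvPolynomial σ R)
    (w v : σ → R) : (restrictLine φ w v).map f = restrictLine (map f φ) (f ∘ w) (f ∘ v) := by
  rw [restrictLine, restrictLine, ← coe_mapRingHom, map_aeval, aeval_def, eval₂_map,
    coe_eval₂Hom]
  congr 1
  · exact RingHom.ext fun a => by simp
  · funext i
    simp

theorem restrictLine_eq_sum (φ : MvPolynomial σ R) (w v : σ → R) :
    restrictLine φ w v = ∑ d ∈ φ.support, Polynomial.C (coeff d φ) *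
      d.prod fun i k => (Polynomial.C (w i) + Polynomial.C (v i) * Polynomial.X) ^ k := by
  conv_lhs => rw [restrictLine, φ.as_sum]
  simp only [map_sum, aeval_monomial, Polynomial.algebraMap_eq]

theorem IsHomogeneous.natDegree_restrictLine_le (hφ : φ.IsHomogeneous m) (w v : σ → R) :
    (restrictLine φ w v).natDegree ≤ m := by
  rw [restrictLine_eq_sum]
  refine natDegree_sum_le_of_forall_le _ _ fun d hd => (natDegree_C_mul_le _ _).trans ?_
  rw [hφ.degree_eq_sum_deg_support hd]
  exact natDegree_finsuppProd_pow_le (fun i => natDegree_C_add_C_mul_X_le _ _) d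

theorem IsHomogeneous.coeff_restrictLine (hφ : φ.IsHomogeneous m) (w v : σ → R) :
    (restrictLine φ w v).coeff m = eval v φ := by
  rw [restrictLine_eq_sum, finsetSum_coeff, eval_eq]
  refine Finset.sum_congr rfl fun d hd => ?_
  rw [Polynomial.coeff_C_mul, hφ.degree_eq_sum_deg_support hd, ← Finsupp.degree_apply,
    coeff_finsuppProd_pow_degree (fun i => natDegree_C_add_C_mul_X_le _ _) d]
  simp [Finsupp.prod]

theorem IsHomogeneous.natDegree_restrictLine (hφ : φ.IsHomogeneous m) (w : σ → R) {v : σ → R}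
    (hv : eval v φ ≠ 0) : (restrictLine φ w v).natDegree = m :=
  (hφ.natDegree_restrictLine_le w v).antisymm
    (le_natDegree_of_ne_zero ((hφ.coeff_restrictLine w v).trans_ne hv))

theorem IsHomogeneous.leadingCoeff_restrictLine (hφ : φ.IsHomogeneous m) (w : σ → R)
    {v : σ → R} (hv : eval v φ ≠ 0) : (restrictLine φ w v).leadingCoeff = eval v φ := by
  rw [leadingCoeff, hφ.natDegree_restrictLine w hv, hφ.coeff_restrictLine]

theorem IsHomogeneous.eval_smul (hφ : φ.IsHomogeneous m) (c : R) (x : σ → R) :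
    eval (c • x) φ = c ^ m * eval x φ := by
  rw [eval_eq, eval_eq, Finset.mul_sum]
  refine Finset.sum_congr rfl fun d hd => ?_
  simp only [Pi.smul_apply, smul_eq_mul, mul_pow, Finset.prod_mul_distrib,
    Finset.prod_pow_eq_pow_sum, ← hφ.degree_eq_sum_deg_support hd]
  ring

end RestrictLine

section ZerosAlongLines

variable {σ : Type*} {m : ℕ}

theorem IsHomogeneous.exists_norm_le_of_eval_eq_zero [Fintype σ] {𝕜 : Type*} [NormedField 𝕜]
    {P : MvPolynomial σ 𝕜} (hP : P.IsHomogeneous m) (W : σ → 𝕜) {v₀ : σ → 𝕜}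
    (hv₀ : eval v₀ P ≠ 0) :
    ∃ R, ∀ᶠ v in 𝓝 v₀, ∀ t : 𝕜, eval (W + t • v) P = 0 → ‖t‖ ≤ R := by
  obtain ⟨η, hη, hball⟩ := Metric.eventually_nhds_iff.mp
    ((continuous_eval P).continuousAt.eventually_ne hv₀)
  refine ⟨2 * ‖W‖ / η, Metric.eventually_nhds_iff.mpr ⟨η / 2, half_pos hη, fun v hv t ht => ?_⟩⟩
  by_contra! hR
  have ht0 : t ≠ 0 := by
    rintro rfl
    simp only [norm_zero] at hR
    linarith [div_nonneg (mul_nonneg zero_le_two (norm_nonneg W)) hη.le]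
  -- `W + t • v = t • (t⁻¹ • W + v)`, and `t⁻¹ • W + v` is close to `v₀`
  have hnear : dist (t⁻¹ • W + v) v₀ < η := by
    calc dist (t⁻¹ • W + v) v₀ ≤ ‖t⁻¹ • W‖ + dist v v₀ := by
          rw [dist_eq_norm, dist_eq_norm, add_sub_assoc]
          exact norm_add_le _ _
      _ < η / 2 + η / 2 := by
          refine add_lt_add ?_ hv
          rw [norm_smul, norm_inv, inv_mul_lt_iff₀ (norm_pos_iff.mpr ht0)]
          rw [div_lt_iff₀ hη] at hR
          linarith
      _ = η := add_halves η
  apply hball hnear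
  have hscale := hP.eval_smul t (t⁻¹ • W + v)
  rw [smul_add, smul_inv_smul₀ ht0, ht] at hscale
  exact (mul_eq_zero.mp hscale.symm).resolve_left (pow_ne_zero _ ht0)

theorem IsHomogeneous.eventually_forall_eval_ne_zero [Fintype σ] {𝕜 : Type*} [NormedField 𝕜]
    [ProperSpace 𝕜] {P : MvPolynomial σ 𝕜} (hP : P.IsHomogeneous m) (W : σ → 𝕜) {v₀ : σ → 𝕜}
    (hv₀ : eval v₀ P ≠ 0) {Z : Set 𝕜} (hZ : IsClosed Z) (h : ∀ t ∈ Z, eval (W + t • v₀) P ≠ 0) :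
    ∀ᶠ v in 𝓝 v₀, ∀ t ∈ Z, eval (W + t • v) P ≠ 0 := by
  obtain ⟨R, hR⟩ := hP.exists_norm_le_of_eval_eq_zero W hv₀
  have hcont : Continuous fun p : (σ → 𝕜) × 𝕜 => eval (W + p.2 • p.1) P :=
    (continuous_eval P).comp (continuous_const.add (continuous_snd.smul continuous_fst))
  have hK : ∀ᶠ v in 𝓝 v₀, ∀ t ∈ Z ∩ Metric.closedBall (0 : 𝕜) R, eval (W + t • v) P ≠ 0 :=
    ((isCompact_closedBall (0 : 𝕜) R).inter_left hZ).eventually_forall_of_forall_eventually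
      fun t ht => hcont.continuousAt.eventually_ne (h t ht.1)
  filter_upwards [hR, hK] with v hvR hvK t ht ht0
  exact hvK t ⟨ht, mem_closedBall_zero_iff.mpr (hvR t ht0)⟩ ht0

/-- Hurwitz's theorem for the restrictions of a homogeneous polynomial to lines. -/
theorem IsHomogeneous.eval_ne_zero_of_tendsto {P : MvPolynomial σ ℂ} (hP : P.IsHomogeneous m)
    {α : Type*} {l : Filter α} [l.NeBot] {w v : α → σ → ℂ} {w₀ v₀ : σ → ℂ}
    (hw : Tendsto w l (𝓝 w₀)) (hv : Tendsto v l (𝓝 v₀)) (hv₀ : eval v₀ P ≠ 0)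
    (h : ∀ᶠ a in l, ∀ t : ℂ, 0 < t.im → eval (w a + t • v a) P ≠ 0) {t : ℂ} (ht : 0 < t.im) :
    eval (w₀ + t • v₀) P ≠ 0 := by
  have hlim_lc : Tendsto (fun a => ‖eval (v a) P‖ * t.im ^ m) l (𝓝 (‖eval v₀ P‖ * t.im ^ m)) :=
    (((continuous_eval P).tendsto v₀).comp hv).norm.mul_const _
  have hlim_val : Tendsto (fun a => ‖eval (w a + t • v a) P‖) l (𝓝 ‖eval (w₀ + t • v₀) P‖) :=
    (((continuous_eval P).tendsto _).comp (hw.add (hv.const_smul t))).norm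
  -- every root `r` of `t ↦ P (w a + t • v a)` has `Im r ≤ 0`, hence `Im t ≤ ‖t - r‖`
  have hbound : ∀ᶠ a in l, ‖eval (v a) P‖ * t.im ^ m ≤ ‖eval (w a + t • v a) P‖ := by
    filter_upwards [h, hv.eventually ((continuous_eval P).continuousAt.eventually_ne hv₀)]
      with a ha hva
    have hlow :=
      (IsAlgClosed.splits (restrictLine P (w a) (v a))).norm_leadingCoeff_mul_pow_le_norm_eval
        t ht.le fun r hr => ?_
    · rwa [hP.leadingCoeff_restrictLine _ hva, hP.natDegree_restrictLine _ hva,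
        eval_restrictLine] at hlow
    have hr_im : r.im ≤ 0 := by
      by_contra! hr_pos
      exact ha r hr_pos (by simpa [eval_restrictLine] using isRoot_of_mem_roots hr)
    calc t.im ≤ (t - r).im := by simp; linarith
      _ ≤ ‖t - r‖ := Complex.im_le_norm _
  have hlimit := le_of_tendsto_of_tendsto hlim_lc hlim_val hbound
  intro h0
  rw [h0, norm_zero] at hlimit
  exact (mul_pos (norm_pos_iff.mpr hv₀) (pow_pos ht m)).not_ge hlimit

end ZerosAlongLines

section Hyperbolic

open Complex

variable {σ : Type*} {m : ℕ} {F : MvPolynomial σ ℝ}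

theorem IsHomogeneous.splits_restrictLine_iff (hF : F.IsHomogeneous m) (x : σ → ℝ) {v : σ → ℝ}
    (hv : eval v F ≠ 0) : (restrictLine F x v).Splits ↔
      ∀ z : ℂ, eval (ofRealHom ∘ x + z • ofRealHom ∘ v) (F.map ofRealHom) = 0 → z.im = 0 := by
  have hroot (z : ℂ) : ((restrictLine F x v).map ofRealHom).IsRoot z ↔
      eval (ofRealHom ∘ x + z • ofRealHom ∘ v) (F.map ofRealHom) = 0 := by
    rw [IsRoot, map_restrictLine, eval_restrictLine]
  constructor
  · intro hs z hz
    have hne : restrictLine F x v ≠ 0 := fun h0 => hv (by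
      simpa [h0] using (hF.coeff_restrictLine x v).symm)
    obtain ⟨r, rfl⟩ := hs.mem_range_of_isRoot hne ((hroot z).mpr hz)
    simp
  · intro h
    refine Splits.of_splits_map ofRealHom (IsAlgClosed.splits _) fun z hz => ⟨z.re, ?_⟩
    have hz_im := h z ((hroot z).mp (isRoot_of_mem_roots hz))
    apply Complex.ext <;> simp [hz_im]

theorem eval_star_map_ofRealHom (F : MvPolynomial σ ℝ) (z : σ → ℂ) :
    eval (star z) (F.map ofRealHom) = star (eval z (F.map ofRealHom)) := by
  change _ = starRingEnd ℂ _
  rw [map_eval, map_map, show (starRingEnd ℂ).comp ofRealHom = ofRealHom from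
    RingHom.ext fun r => by simp]
  rfl

theorem continuous_comp_ofRealHom : Continuous fun x : σ → ℝ => ofRealHom ∘ x :=
  continuous_pi fun i => continuous_ofReal.comp (continuous_apply i)

theorem eval_comp_ofRealHom_ne_zero {x : σ → ℝ} (hx : eval x F ≠ 0) :
    eval (ofRealHom ∘ x) (F.map ofRealHom) ≠ 0 := by
  rwa [← MvPolynomial.map_eval, _root_.map_ne_zero]

variable [Fintype σ]

theorem IsHomogeneous.isOpen_setOf_forall_eval_ne_zero (hF : F.IsHomogeneous m) (W : σ → ℂ) :
    IsOpen {v : σ → ℝ | eval v F ≠ 0 ∧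
      ∀ t : ℂ, 0 ≤ t.im → eval (W + t • ofRealHom ∘ v) (F.map ofRealHom) ≠ 0} := by
  refine isOpen_iff_mem_nhds.mpr fun v₀ ⟨hv₀, hW⟩ => ?_
  have hnear := (hF.map ofRealHom).eventually_forall_eval_ne_zero W
    (eval_comp_ofRealHom_ne_zero hv₀) (isClosed_le continuous_const continuous_im) hW
  filter_upwards [(continuous_eval F).continuousAt.eventually_ne hv₀,
    (continuous_comp_ofRealHom.tendsto v₀).eventually hnear] with v hvF hvW
  exact ⟨hvF, hvW⟩

theorem IsHomogeneous.eval_ne_zero_of_mem_connectedComponentIn (hF : F.IsHomogeneous m)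
    {e : σ → ℝ} (he : ∀ x, (restrictLine F x e).Splits) (hFe : eval e F ≠ 0) {v : σ → ℝ}
    (hv : v ∈ connectedComponentIn {v | eval v F ≠ 0} e) (x : σ → ℝ) {s : ℝ} (hs : 0 < s)
    {t : ℂ} (ht : 0 ≤ t.im) :
    eval (ofRealHom ∘ x + (s * I) • ofRealHom ∘ e + t • ofRealHom ∘ v) (F.map ofRealHom) ≠ 0 := by
  set W := ofRealHom ∘ x + (s * I) • ofRealHom ∘ e
  have hreal (y : σ → ℝ) (z : ℂ) (hz : z.im ≠ 0) :
      eval (ofRealHom ∘ y + z • ofRealHom ∘ e) (F.map ofRealHom) ≠ 0 :=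
    fun h0 => hz ((hF.splits_restrictLine_iff y hFe).mp (he y) z h0)
  set U := {v : σ → ℝ | eval v F ≠ 0 ∧
    ∀ t : ℂ, 0 ≤ t.im → eval (W + t • ofRealHom ∘ v) (F.map ofRealHom) ≠ 0}
  have heU : e ∈ U := by
    refine ⟨hFe, fun t ht => ?_⟩
    rw [add_assoc, ← add_smul]
    exact hreal x _ (by simp; linarith)
  have hclosure : closure U ∩ connectedComponentIn {v | eval v F ≠ 0} e ⊆ U := by
    rintro u ⟨hu, huC⟩
    have huF : eval u F ≠ 0 := connectedComponentIn_subset _ _ huC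
    refine ⟨huF, fun t ht => ?_⟩
    rcases ht.lt_or_eq with ht | ht
    · have : (𝓝[U] u).NeBot := mem_closure_iff_nhdsWithin_neBot.mp hu
      exact (hF.map ofRealHom).eval_ne_zero_of_tendsto tendsto_const_nhds
        continuous_comp_ofRealHom.continuousWithinAt (eval_comp_ofRealHom_ne_zero huF)
        (eventually_nhdsWithin_of_forall fun (y : σ → ℝ) (hy : y ∈ U) τ hτ => hy.2 τ hτ.le) ht
    · have hline : W + t • ofRealHom ∘ u
          = ofRealHom ∘ (x + t.re • u) + (s * I) • ofRealHom ∘ e := by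
        ext i
        apply Complex.ext <;> simp [W, ← ht]
      rw [hline]
      exact hreal _ _ (by simp [hs.ne'])
  have hCU := isPreconnected_connectedComponentIn.subset_of_closure_inter_subset
    (hF.isOpen_setOf_forall_eval_ne_zero W) ⟨e, mem_connectedComponentIn hFe, heU⟩ hclosure
  exact (hCU hv).2 t ht

theorem IsHomogeneous.splits_restrictLine_of_mem_connectedComponentIn (hF : F.IsHomogeneous m)
    {e : σ → ℝ} (he : ∀ x, (restrictLine F x e).Splits) (hFe : eval e F ≠ 0) {v : σ → ℝ}
    (hv : v ∈ connectedComponentIn {v | eval v F ≠ 0} e) (x : σ → ℝ) :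
    (restrictLine F x v).Splits := by
  have hvF : eval v F ≠ 0 := connectedComponentIn_subset _ _ hv
  have hlim : Tendsto (fun s : ℝ => ofRealHom ∘ x + (s * I) • ofRealHom ∘ e) (𝓝[>] 0)
      (𝓝 (ofRealHom ∘ x)) := by
    refine (Continuous.tendsto' ?_ 0 _ (by simp)).mono_left nhdsWithin_le_nhds
    fun_prop
  have hupper (z : ℂ) (hz : 0 < z.im) :
      eval (ofRealHom ∘ x + z • ofRealHom ∘ v) (F.map ofRealHom) ≠ 0 :=
    (hF.map ofRealHom).eval_ne_zero_of_tendsto hlim tendsto_const_nhds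
      (eval_comp_ofRealHom_ne_zero hvF)
      (eventually_nhdsWithin_of_forall fun s hs t ht =>
        hF.eval_ne_zero_of_mem_connectedComponentIn he hFe hv x hs ht.le) hz
  refine (hF.splits_restrictLine_iff x hvF).mpr fun z hz => ?_
  rcases lt_trichotomy z.im 0 with hneg | hzero | hpos
  · refine absurd ?_ (hupper (star z) (by simpa using hneg))
    have hconj : ofRealHom ∘ x + star z • ofRealHom ∘ v
        = star (ofRealHom ∘ x + z • ofRealHom ∘ v) := by
      ext i
      simp
    rw [hconj, eval_star_map_ofRealHom, hz, star_zero]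
  · exact hzero
  · exact absurd hz (hupper z hpos)

end Hyperbolic

end MvPolynomial

theorem stmt_3_general (m : ℕ) (F : MvPolynomial (Fin 3) ℝ)
    (hhom : F.IsHomogeneous m) (e : Fin 3 → ℝ)
    (he : IsHypDir F e) (hne : MvPolynomial.eval e F ≠ 0) :
    e ∈ interior {v : Fin 3 → ℝ | IsHypDir F v} ∧
      (interior {v : Fin 3 → ℝ | IsHypDir F v}).Nonempty := by
  set C := connectedComponentIn {v | MvPolynomial.eval v F ≠ 0} e
  have hC : C ⊆ {v | IsHypDir F v} := fun v hv x =>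
    hhom.splits_restrictLine_of_mem_connectedComponentIn he hne hv x
  have hC_open : IsOpen C :=
    (isOpen_ne_fun (MvPolynomial.continuous_eval F) continuous_const).connectedComponentIn
  have he_int : e ∈ interior {v | IsHypDir F v} :=
    interior_mono hC (hC_open.interior_eq.symm ▸ mem_connectedComponentIn hne)
  exact ⟨he_int, e, he_int⟩

theorem stmt_3 (m : ℕ) (hm : 1 ≤ m) (F : MvPolynomial (Fin 3) ℝ) (hF : F ≠ 0)
    (hhom : F.IsHomogeneous m) (e : Fin 3 → ℝ)
    (he : IsHypDir F e) (hne : MvPolynomial.eval e F ≠ 0) :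
    e ∈ interior {v : Fin 3 → ℝ | IsHypDir F v} ∧
      (interior {v : Fin 3 → ℝ | IsHypDir F v}).Nonempty :=
  stmt_3_general m F hhom e he hne
end

section
/- Let F(X, Y, Z) = Z·Y² − X³ (the cuspidal plane cubic, with cusp at the point (0 : 0 : 1)). Then the set of hyperbolicity directions of F is exactly the line ℝ·(0, 0, 1): a vector e ∈ ℝ³ is a hyperbolicity direction of F if and only if e is a scalar multiple of (0, 0, 1). (This is the paper's example: for a cuspidal cubic C, the set hyp(C) consists of the cusp only.) -/
open Polynomial

theorem Polynomial.Splits.two_mul_coeff_zero_mul_coeff_two_le_sq {R : Type*} [CommRing R]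
    [LinearOrder R] [IsStrictOrderedRing R] {p : R[X]} (hp : p.Splits) :
    2 * p.coeff 0 * p.coeff 2 ≤ p.coeff 1 ^ 2 := by
  induction hp using Submonoid.closure_induction_left with
  | one => simp [coeff_one]
  | mul_left f hf q _ ih =>
    rcases hf with ⟨a, rfl⟩ | ⟨a, rfl⟩
    · simp only [coeff_C_mul]
      linarith [mul_le_mul_of_nonneg_left ih (sq_nonneg a)]
    · simp only [add_mul, coeff_add, coeff_X_mul, coeff_X_mul_zero, coeff_C_mul, zero_add]
      have hdisc :
          (q.coeff 0 + a * q.coeff 1) ^ 2 - 2 * (a * q.coeff 0) * (q.coeff 1 + a * q.coeff 2)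
            = q.coeff 0 ^ 2 + a ^ 2 * (q.coeff 1 ^ 2 - 2 * q.coeff 0 * q.coeff 2) := by ring
      linarith [sq_nonneg (q.coeff 0), mul_nonneg (sq_nonneg a) (sub_nonneg.2 ih)]

theorem not_isHypDir_of_sq_coeff_one_lt {F : MvPolynomial (Fin 3) ℝ} {e : Fin 3 → ℝ}
    (x : Fin 3 → ℝ)
    (hx : (linePoly F x e).coeff 1 ^ 2 < 2 * (linePoly F x e).coeff 0 * (linePoly F x e).coeff 2) :
    ¬ IsHypDir F e :=
  fun he => hx.not_ge (he x).two_mul_coeff_zero_mul_coeff_two_le_sq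

/-- `Z·Y² − X³`, with `X 0 = X`, `X 1 = Y`, `X 2 = Z`. -/
noncomputable def cuspidalCubic : MvPolynomial (Fin 3) ℝ :=
  MvPolynomial.X 2 * MvPolynomial.X 1 ^ 2 - MvPolynomial.X 0 ^ 3

section LinePoly

variable (x e : Fin 3 → ℝ)

theorem linePoly_cuspidalCubic :
    linePoly cuspidalCubic x e =
      C (x 2 * x 1 ^ 2 - x 0 ^ 3)
        + C (2 * x 1 * x 2 * e 1 + x 1 ^ 2 * e 2 - 3 * x 0 ^ 2 * e 0) * X
        + C (x 2 * e 1 ^ 2 + 2 * x 1 * e 1 * e 2 - 3 * x 0 * e 0 ^ 2) * X ^ 2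
        + C (e 2 * e 1 ^ 2 - e 0 ^ 3) * X ^ 3 := by
  simp only [linePoly, cuspidalCubic, map_sub, map_mul, map_pow, map_add, map_ofNat,
    MvPolynomial.aeval_X]
  ring

theorem linePoly_cuspidalCubic_coeff_zero :
    (linePoly cuspidalCubic x e).coeff 0 = x 2 * x 1 ^ 2 - x 0 ^ 3 := by
  simp only [linePoly_cuspidalCubic, coeff_add, coeff_C_mul, coeff_X_pow, coeff_X, coeff_C]
  norm_num

theorem linePoly_cuspidalCubic_coeff_one :
    (linePoly cuspidalCubic x e).coeff 1 =
      2 * x 1 * x 2 * e 1 + x 1 ^ 2 * e 2 - 3 * x 0 ^ 2 * e 0 := by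
  simp only [linePoly_cuspidalCubic, coeff_add, coeff_C_mul, coeff_X_pow, coeff_X, coeff_C]
  norm_num

theorem linePoly_cuspidalCubic_coeff_two :
    (linePoly cuspidalCubic x e).coeff 2 =
      x 2 * e 1 ^ 2 + 2 * x 1 * e 1 * e 2 - 3 * x 0 * e 0 ^ 2 := by
  simp only [linePoly_cuspidalCubic, coeff_add, coeff_C_mul, coeff_X_pow, coeff_X, coeff_C]
  norm_num

end LinePoly

theorem isHypDir_cuspidalCubic_of_eq_zero {e : Fin 3 → ℝ} (h0 : e 0 = 0) (h1 : e 1 = 0) :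
    IsHypDir cuspidalCubic e := by
  intro x
  apply Splits.of_natDegree_le_one
  rw [linePoly_cuspidalCubic, h0, h1]
  simp only [mul_zero, zero_mul, ne_eq, OfNat.ofNat_ne_zero, not_false_eq_true, zero_pow,
    sub_zero, add_zero, map_zero]
  compute_degree

-- Both base points are chosen so that `p₁² - 2 p₀ p₂ = -1`.
theorem eq_zero_of_isHypDir_cuspidalCubic {e : Fin 3 → ℝ} (he : IsHypDir cuspidalCubic e) :
    e 0 = 0 ∧ e 1 = 0 := by
  rcases eq_or_ne (e 1) 0 with h1 | h1
  · refine ⟨?_, h1⟩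
    by_contra h0
    refine not_isHypDir_of_sq_coeff_one_lt
      ![1, 1, 1 - ((e 2 - 3 * e 0) ^ 2 + 1) / (6 * e 0 ^ 2)] ?_ he
    simp only [linePoly_cuspidalCubic_coeff_zero, linePoly_cuspidalCubic_coeff_one,
      linePoly_cuspidalCubic_coeff_two, Matrix.cons_val, h1]
    norm_num
    field_simp
    linarith
  · refine absurd he (not_isHypDir_of_sq_coeff_one_lt
      ![1, 0, -(3 * e 0 ^ 2 + 1) / (2 * e 1 ^ 2)] ?_)
    simp only [linePoly_cuspidalCubic_coeff_zero, linePoly_cuspidalCubic_coeff_one,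
      linePoly_cuspidalCubic_coeff_two, Matrix.cons_val]
    norm_num
    field_simp
    linarith

/-- The cuspidal cubic `F(X, Y, Z) = Z·Y² − X³`, with variables `X 0 = X`, `X 1 = Y`,
`X 2 = Z`: its hyperbolicity directions are exactly the multiples of `(0, 0, 1)`. -/
theorem stmt_4 :
    ∀ e : Fin 3 → ℝ,
      IsHypDir (MvPolynomial.X 2 * MvPolynomial.X 1 ^ 2 - MvPolynomial.X 0 ^ 3 :
          MvPolynomial (Fin 3) ℝ) e ↔
        ∃ c : ℝ, e = c • ![(0 : ℝ), 0, 1] := by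
  intro e
  refine ⟨fun he => ?_, ?_⟩
  · obtain ⟨h0, h1⟩ := eq_zero_of_isHypDir_cuspidalCubic he
    refine ⟨e 2, funext fun i => ?_⟩
    fin_cases i <;> simp [h0, h1]
  · rintro ⟨c, rfl⟩
    exact isHypDir_cuspidalCubic_of_eq_zero (by simp) (by simp)
end

section
/- For every natural number n, the set of coefficient vectors (a₀, a₁, …, a_n) ∈ ℝ^{n+1} such that the real polynomial a₀ + a₁X + ⋯ + a_nX^n splits over ℝ (all of its complex roots are real; the zero polynomial is included) is a closed subset of ℝ^{n+1}. In other words, a coefficientwise limit of real polynomials of degree at most n that split over ℝ again splits over ℝ. -/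
/-!
A real polynomial `p` splits iff `|p(z)|` does not decrease as `z` moves away from the real axis
along a vertical line. If `p = c ∏ (X - rᵢ)` this holds factor by factor, since
`|x + iy - r|² = (x - r)² + y²`. Conversely, a non-real root `w` would force `p` to vanish on the
whole vertical segment from `Re w` to `w`, so `p = 0`. Each such inequality is a closed condition
on the coefficients, hence so is splitting.
-/

open Polynomial

lemma Complex.norm_sub_ofReal_le_of_re_eq {z w : ℂ} (hre : z.re = w.re) (him : |z.im| ≤ |w.im|)
    (r : ℝ) : ‖z - r‖ ≤ ‖w - r‖ := by
  have him_sq : z.im ^ 2 ≤ w.im ^ 2 := sq_le_sq.mpr him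
  rw [← sq_le_sq₀ (norm_nonneg _) (norm_nonneg _), Complex.sq_norm, Complex.sq_norm,
    Complex.normSq_apply, Complex.normSq_apply]
  simp only [Complex.sub_re, Complex.sub_im, Complex.ofReal_re, Complex.ofReal_im, sub_zero, hre]
  nlinarith

theorem Polynomial.Splits.norm_aeval_le_of_re_eq {p : ℝ[X]} (hp : p.Splits) {z w : ℂ}
    (hre : z.re = w.re) (him : |z.im| ≤ |w.im|) : ‖aeval z p‖ ≤ ‖aeval w p‖ := by
  have hfactor (u : ℂ) :
      ‖aeval u p‖ = ‖p.leadingCoeff‖ * (p.roots.map fun r : ℝ ↦ ‖u - r‖).prod := by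
    rw [(hp.map _).aeval_eq_prod_aroots, aroots, hp.roots_map, norm_mul, Multiset.map_map,
      Complex.coe_algebraMap, Complex.norm_real]
    exact congrArg _ ((map_multiset_prod (normHom : ℂ →*₀ ℝ) _).trans
      (congrArg _ (Multiset.map_map _ _ _)))
  rw [hfactor, hfactor]
  gcongr
  exact Multiset.prod_map_le_prod_map₀ _ _ (fun _ _ ↦ norm_nonneg _)
    fun r _ ↦ Complex.norm_sub_ofReal_le_of_re_eq hre him r

theorem Polynomial.splits_of_norm_aeval_le {p : ℝ[X]}
    (h : ∀ z w : ℂ, z.re = w.re → |z.im| ≤ |w.im| → ‖aeval z p‖ ≤ ‖aeval w p‖) : p.Splits := by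
  rcases eq_or_ne p 0 with rfl | hp
  · exact Splits.zero
  refine Splits.of_splits_map (algebraMap ℝ ℂ) (IsAlgClosed.splits _) fun w hw ↦ ?_
  rw [mem_roots (map_ne_zero hp), IsRoot, eval_map_algebraMap] at hw
  have him : w.im = 0 := by
    by_contra him
    have hsegment : ∀ t ∈ Set.Icc (0 : ℝ) 1, aeval (⟨w.re, t * w.im⟩ : ℂ) p = 0 := by
      rintro t ⟨ht0, ht1⟩
      refine norm_le_zero_iff.mp ((h ⟨w.re, t * w.im⟩ w rfl ?_).trans (by rw [hw, norm_zero]))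
      rw [abs_mul, abs_of_nonneg ht0]
      exact mul_le_of_le_one_left (abs_nonneg _) ht1
    refine map_ne_zero (f := algebraMap ℝ ℂ) hp (eq_zero_of_infinite_isRoot _ ?_)
    refine ((Set.Icc_infinite (zero_lt_one' ℝ)).image (f := fun t ↦ (⟨w.re, t * w.im⟩ : ℂ))
      fun s _ t _ hst ↦ ?_).mono ?_
    · exact mul_right_cancel₀ him (congrArg Complex.im hst)
    · rintro - ⟨t, ht, rfl⟩
      simpa [IsRoot, eval_map_algebraMap] using hsegment t ht
  exact ⟨w.re, Complex.ext (by simp) (by simp [him])⟩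

theorem Polynomial.splits_iff_norm_aeval_le {p : ℝ[X]} :
    p.Splits ↔ ∀ z w : ℂ, z.re = w.re → |z.im| ≤ |w.im| → ‖aeval z p‖ ≤ ‖aeval w p‖ :=
  ⟨fun hp _ _ ↦ hp.norm_aeval_le_of_re_eq, splits_of_norm_aeval_le⟩

theorem isClosed_setOf_splits {X : Type*} [TopologicalSpace X] {f : X → ℝ[X]}
    (hf : ∀ z : ℂ, Continuous fun x ↦ aeval z (f x)) : IsClosed {x | (f x).Splits} := by
  have hchar : {x | (f x).Splits} =
      ⋂ zw ∈ {zw : ℂ × ℂ | zw.1.re = zw.2.re ∧ |zw.1.im| ≤ |zw.2.im|},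
        {x | ‖aeval zw.1 (f x)‖ ≤ ‖aeval zw.2 (f x)‖} := by
    ext x
    simp only [Set.mem_ofPred_eq, Set.mem_iInter, Prod.forall, and_imp]
    exact splits_iff_norm_aeval_le
  rw [hchar]
  exact isClosed_biInter fun zw _ ↦ isClosed_le (hf zw.1).norm (hf zw.2).norm

theorem stmt_7 (n : ℕ) :
    IsClosed {a : Fin (n + 1) → ℝ |
      (∑ i : Fin (n + 1), Polynomial.C (a i) * Polynomial.X ^ (i : ℕ)).Splits} := by
  refine isClosed_setOf_splits fun z ↦ ?_
  simp only [map_sum, map_mul, aeval_C, aeval_X_pow]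
  fun_prop
end

section
/- Let A ∈ GL₄(ℝ), let I ⊆ ℝ be an open interval, and let r = (r₁, r₂, r₃) : I → ℝ³ be three times differentiable. Define R(t) = A·(1, r₁(t), r₂(t), r₃(t)) ∈ ℝ⁴ with coordinates (R₀, R₁, R₂, R₃), assume R₀(t) ≠ 0 for all t ∈ I, and set r̃ = (R₁/R₀, R₂/R₀, R₃/R₀) : I → ℝ³. Then for every t ∈ I, det(r̃'(t), r̃''(t), r̃'''(t)) = det(A) · det(r'(t), r''(t), r'''(t)) / R₀(t)⁴. In particular, if det(A) > 0 then det(r̃', r̃'', r̃''') has everywhere the same sign as det(r', r'', r'''); this is the paper's claim that the sign of the torsion of a curve in ℝP³ does not depend on the choice of positively oriented affine chart. -/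
/-- Determinant of the 3×3 matrix with columns `u`, `v`, `w`. -/
noncomputable def det3 (u v w : Fin 3 → ℝ) : ℝ :=
  Matrix.det (Matrix.of ![u, v, w]).transpose

/-!
Write `R = R₀ • ρ` with `ρ = (1, r̃)`. The matrix with columns `R, R', R'', R'''` is `A` times
the matrix with columns `(1, r), (0, r'), (0, r''), (0, r''')`, whose determinant is
`det(r', r'', r''')`. By Leibniz's rule it is also the matrix with columns `ρ, ρ', ρ'', ρ'''`
times an upper triangular matrix with diagonal `R₀`, so its determinant is
`R₀⁴ det(r̃', r̃'', r̃''')`. The quotient rule shows that `r̃` is three times differentiable.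
-/

open Set Matrix

def det4 {K : Type*} [CommRing K] (u v w x : Fin 4 → K) : K :=
  (Matrix.of ![u, v, w, x])ᵀ.det

theorem det4_vecCons_one_zero (x u v w : Fin 3 → ℝ) :
    det4 (vecCons 1 x) (vecCons 0 u) (vecCons 0 v) (vecCons 0 w) = det3 u v w := by
  have hminor : (of ![vecCons 1 x, vecCons 0 u, vecCons 0 v, vecCons 0 w]).submatrix
      Fin.succ Fin.succ = of ![u, v, w] := by
    ext i j
    simp
  rw [det4, det3, det_transpose, det_transpose, det_succ_column_zero]
  simp [Fin.sum_univ_succ, hminor]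

theorem det4_mulVec {K : Type*} [CommRing K] (A : Matrix (Fin 4) (Fin 4) K)
    (u v w x : Fin 4 → K) :
    det4 (A *ᵥ u) (A *ᵥ v) (A *ᵥ w) (A *ᵥ x) = A.det * det4 u v w x := by
  rw [det4, det4, ← det_mul]
  congr 1
  ext i j
  fin_cases j <;> simp [mul_apply, mulVec, dotProduct]

theorem det4_leibniz {K : Type*} [CommRing K] (f₀ f₁ f₂ f₃ : K) (u₀ u₁ u₂ u₃ : Fin 4 → K) :
    det4 (f₀ • u₀) (f₁ • u₀ + f₀ • u₁) (f₂ • u₀ + (2 * f₁) • u₁ + f₀ • u₂)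
      (f₃ • u₀ + (3 * f₂) • u₁ + (3 * f₁) • u₂ + f₀ • u₃) = f₀ ^ 4 * det4 u₀ u₁ u₂ u₃ := by
  set T : Matrix (Fin 4) (Fin 4) K :=
    !![f₀, f₁, f₂, f₃; 0, f₀, 2 * f₁, 3 * f₂; 0, 0, f₀, 3 * f₁; 0, 0, 0, f₀]
  have hcols : (Matrix.of ![f₀ • u₀, f₁ • u₀ + f₀ • u₁, f₂ • u₀ + (2 * f₁) • u₁ + f₀ • u₂,
      f₃ • u₀ + (3 * f₂) • u₁ + (3 * f₁) • u₂ + f₀ • u₃])ᵀ =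
      (Matrix.of ![u₀, u₁, u₂, u₃])ᵀ * T := by
    ext i j
    fin_cases j <;> simp [T, mul_apply, Fin.sum_univ_succ, mul_comm, add_assoc]
  have hT : T.det = f₀ ^ 4 := by
    rw [det_succ_column_zero]
    simp [T, Fin.sum_univ_succ, det_fin_three, pow_succ, mul_assoc]
  rw [det4, det4, hcols, det_mul, hT, mul_comm]

variable {𝕜 : Type*} [NontriviallyNormedField 𝕜] {F : Type*} [NormedAddCommGroup F]
  [NormedSpace 𝕜 F] {U : Set 𝕜}

def HasThreeDerivsOn (U : Set 𝕜) (f f' f'' f''' : 𝕜 → F) : Prop :=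
  ∀ t ∈ U, HasDerivAt f (f' t) t ∧ HasDerivAt f' (f'' t) t ∧ HasDerivAt f'' (f''' t) t

namespace HasThreeDerivsOn

variable {f f' f'' f''' g : 𝕜 → F}

theorem of_differentiableAt (h₁ : ∀ t ∈ U, DifferentiableAt 𝕜 f t)
    (h₂ : ∀ t ∈ U, DifferentiableAt 𝕜 (deriv f) t)
    (h₃ : ∀ t ∈ U, DifferentiableAt 𝕜 (deriv (deriv f)) t) :
    HasThreeDerivsOn U f (deriv f) (deriv (deriv f)) (deriv (deriv (deriv f))) :=
  fun t ht => ⟨(h₁ t ht).hasDerivAt, (h₂ t ht).hasDerivAt, (h₃ t ht).hasDerivAt⟩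

theorem congr (h : HasThreeDerivsOn U f f' f'' f''') (hU : IsOpen U) (hfg : EqOn f g U) :
    HasThreeDerivsOn U g f' f'' f''' :=
  fun t ht => ⟨(h t ht).1.congr_of_eventuallyEq
    (hfg.symm.eventuallyEq_of_mem (hU.mem_nhds ht)), (h t ht).2⟩

theorem eqOn_deriv (h : HasThreeDerivsOn U f f' f'' f''') (hU : IsOpen U) :
    EqOn (deriv f) f' U ∧ EqOn (deriv (deriv f)) f'' U ∧
      EqOn (deriv (deriv (deriv f))) f''' U := by
  have h₁ : EqOn (deriv f) f' U := fun t ht => (h t ht).1.deriv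
  have h₂ : EqOn (deriv (deriv f)) f'' U := fun t ht => by
    rw [(h₁.eventuallyEq_of_mem (hU.mem_nhds ht)).deriv_eq, (h t ht).2.1.deriv]
  refine ⟨h₁, h₂, fun t ht => ?_⟩
  rw [(h₂.eventuallyEq_of_mem (hU.mem_nhds ht)).deriv_eq, (h t ht).2.2.deriv]

theorem hasThreeDerivsOn_deriv (h : HasThreeDerivsOn U f f' f'' f''') (hU : IsOpen U) :
    HasThreeDerivsOn U f (deriv f) (deriv (deriv f)) (deriv (deriv (deriv f))) :=
  of_differentiableAt (fun t ht => (h t ht).1.differentiableAt)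
    (fun t ht => ((h t ht).2.1.congr_of_eventuallyEq
      ((h.eqOn_deriv hU).1.eventuallyEq_of_mem (hU.mem_nhds ht))).differentiableAt)
    (fun t ht => ((h t ht).2.2.congr_of_eventuallyEq
      ((h.eqOn_deriv hU).2.1.eventuallyEq_of_mem (hU.mem_nhds ht))).differentiableAt)

theorem unique {g' g'' g''' : 𝕜 → F} (hf : HasThreeDerivsOn U f f' f'' f''')
    (hg : HasThreeDerivsOn U f g' g'' g''') (hU : IsOpen U) {t : 𝕜} (ht : t ∈ U) :
    f' t = g' t ∧ f'' t = g'' t ∧ f''' t = g''' t := by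
  obtain ⟨hf₁, hf₂, hf₃⟩ := hf.eqOn_deriv hU
  obtain ⟨hg₁, hg₂, hg₃⟩ := hg.eqOn_deriv hU
  exact ⟨(hf₁ ht).symm.trans (hg₁ ht), (hf₂ ht).symm.trans (hg₂ ht),
    (hf₃ ht).symm.trans (hg₃ ht)⟩

theorem smul {c c' c'' c''' : 𝕜 → 𝕜} (hc : HasThreeDerivsOn U c c' c'' c''')
    (hf : HasThreeDerivsOn U f f' f'' f''') :
    HasThreeDerivsOn U (fun t => c t • f t) (fun t => c' t • f t + c t • f' t)
      (fun t => c'' t • f t + (2 * c' t) • f' t + c t • f'' t)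
      (fun t => c''' t • f t + (3 * c'' t) • f' t + (3 * c' t) • f'' t + c t • f''' t) := by
  intro t ht
  obtain ⟨hc₁, hc₂, hc₃⟩ := hc t ht
  obtain ⟨hf₁, hf₂, hf₃⟩ := hf t ht
  refine ⟨(hc₁.fun_smul hf₁).congr_deriv (add_comm _ _), ?_, ?_⟩
  · convert (hc₂.fun_smul hf₁).fun_add (hc₁.fun_smul hf₂) using 1
    module
  · convert ((hc₃.fun_smul hf₁).fun_add ((hc₂.const_mul 2).fun_smul hf₂)).fun_add
      (hc₁.fun_smul hf₃) using 1
    module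

theorem inv {c c' c'' c''' : 𝕜 → 𝕜} (hc : HasThreeDerivsOn U c c' c'' c''')
    (hc₀ : ∀ t ∈ U, c t ≠ 0) :
    HasThreeDerivsOn U (fun t => (c t)⁻¹) (fun t => -c' t / c t ^ 2)
      (fun t => (2 * c' t ^ 2 - c t * c'' t) / c t ^ 3)
      (fun t => (6 * c t * c' t * c'' t - c t ^ 2 * c''' t - 6 * c' t ^ 3) / c t ^ 4) := by
  intro t ht
  obtain ⟨hc₁, hc₂, hc₃⟩ := hc t ht
  have h₀ := hc₀ t ht
  refine ⟨hc₁.fun_inv h₀, ?_, ?_⟩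
  · refine (hc₂.fun_neg.fun_div (hc₁.fun_pow 2) (pow_ne_zero 2 h₀)).congr_deriv ?_
    field_simp
    ring
  · refine ((((hc₂.fun_pow 2).const_mul 2).fun_sub (hc₁.fun_mul hc₃)).fun_div
      (hc₁.fun_pow 3) (pow_ne_zero 3 h₀)).congr_deriv ?_
    field_simp
    ring

theorem mulVec {m n : Type*} [Fintype m] [Fintype n] (A : Matrix m n 𝕜)
    {f f' f'' f''' : 𝕜 → n → 𝕜} (h : HasThreeDerivsOn U f f' f'' f''') :
    HasThreeDerivsOn U (fun t => A *ᵥ f t) (fun t => A *ᵥ f' t) (fun t => A *ᵥ f'' t)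
      (fun t => A *ᵥ f''' t) := by
  intro t ht
  have hmul {g g' : 𝕜 → n → 𝕜} (hg : HasDerivAt g (g' t) t) :
      HasDerivAt (fun t => A *ᵥ g t) (A *ᵥ g' t) t :=
    hasDerivAt_pi.2 fun i =>
      HasDerivAt.fun_sum fun j _ => (hasDerivAt_pi.1 hg j).const_mul (A i j)
  obtain ⟨h₁, h₂, h₃⟩ := h t ht
  exact ⟨hmul h₁, hmul h₂, hmul h₃⟩

end HasThreeDerivsOn

theorem hasThreeDerivsOn_const (c : F) :
    HasThreeDerivsOn U (fun _ => c) (fun _ => 0) (fun _ => 0) (fun _ => 0) :=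
  fun _ _ => ⟨hasDerivAt_const _ _, hasDerivAt_const _ _, hasDerivAt_const _ _⟩

theorem hasThreeDerivsOn_pi {ι : Type*} [Fintype ι] {E : ι → Type*}
    [∀ i, NormedAddCommGroup (E i)] [∀ i, NormedSpace 𝕜 (E i)] {f f' f'' f''' : 𝕜 → ∀ i, E i} :
    HasThreeDerivsOn U f f' f'' f''' ↔ ∀ i, HasThreeDerivsOn U (fun t => f t i)
      (fun t => f' t i) (fun t => f'' t i) (fun t => f''' t i) := by
  simp only [HasThreeDerivsOn, hasDerivAt_pi]
  exact ⟨fun h i t ht => ⟨(h t ht).1 i, (h t ht).2.1 i, (h t ht).2.2 i⟩,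
    fun h t ht => ⟨fun i => (h i t ht).1, fun i => (h i t ht).2.1, fun i => (h i t ht).2.2⟩⟩

theorem HasThreeDerivsOn.vecCons {n : ℕ} (c : F) {f f' f'' f''' : 𝕜 → Fin n → F}
    (h : HasThreeDerivsOn U f f' f'' f''') :
    HasThreeDerivsOn U (fun t => vecCons c (f t)) (fun t => vecCons 0 (f' t))
      (fun t => vecCons 0 (f'' t)) (fun t => vecCons 0 (f''' t)) :=
  hasThreeDerivsOn_pi.2 fun i => Fin.cases (hasThreeDerivsOn_const c)
    (fun j => hasThreeDerivsOn_pi.1 h j) i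

theorem stmt_9_general (A : Matrix (Fin 4) (Fin 4) ℝ)
    (a b : ℝ) (I : Set ℝ) (hI : I = Set.Ioo a b)
    (r : ℝ → Fin 3 → ℝ)
    (hr1 : ∀ t ∈ I, DifferentiableAt ℝ r t)
    (hr2 : ∀ t ∈ I, DifferentiableAt ℝ (deriv r) t)
    (hr3 : ∀ t ∈ I, DifferentiableAt ℝ (deriv (deriv r)) t)
    (R : ℝ → Fin 4 → ℝ)
    (hR : ∀ t, R t = A.mulVec (Matrix.vecCons 1 (r t)))
    (hR0 : ∀ t ∈ I, R t 0 ≠ 0)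
    (rt : ℝ → Fin 3 → ℝ)
    (hrt : ∀ t, rt t = fun i : Fin 3 => R t i.succ / R t 0) :
    ∀ t ∈ I,
      det3 (deriv rt t) (deriv (deriv rt) t) (deriv (deriv (deriv rt)) t)
        = A.det * det3 (deriv r t) (deriv (deriv r) t) (deriv (deriv (deriv r)) t)
            / (R t 0) ^ 4 := by
  subst hI
  intro t ht
  have hU : IsOpen (Ioo a b) := isOpen_Ioo
  have hRr : HasThreeDerivsOn (Ioo a b) R _ _ _ :=
    (((HasThreeDerivsOn.of_differentiableAt hr1 hr2 hr3).vecCons 1).mulVec A).congr hU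
      fun s _ => (hR s).symm
  have hR₀ := hasThreeDerivsOn_pi.1 hRr 0
  have hrtd : HasThreeDerivsOn (Ioo a b) rt _ _ _ := hasThreeDerivsOn_pi.2 fun i =>
    (hasThreeDerivsOn_pi.1 ((hR₀.inv hR0).smul hRr) i.succ).congr hU fun s _ => by
      simp [hrt s, div_eq_inv_mul]
  have hRρ : ∀ s ∈ Ioo a b, R s 0 • vecCons 1 (rt s) = R s := fun s hs => by
    ext i
    refine Fin.cases ?_ (fun j => ?_) i
    · simp
    · simp [hrt s, mul_div_cancel₀ _ (hR0 s hs)]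
  have hRrt : HasThreeDerivsOn (Ioo a b) R _ _ _ :=
    (hR₀.smul ((hrtd.hasThreeDerivsOn_deriv hU).vecCons 1)).congr hU hRρ
  -- compare the derivatives of `R = A (1, r)` with those of `R = R₀ • (1, r̃)`
  obtain ⟨h₁, h₂, h₃⟩ := hRr.unique hRrt hU ht
  have hW := det4_leibniz (R t 0) ((A *ᵥ vecCons 0 (deriv r t)) 0)
    ((A *ᵥ vecCons 0 (deriv (deriv r) t)) 0) ((A *ᵥ vecCons 0 (deriv (deriv (deriv r)) t)) 0)
    (vecCons 1 (rt t)) (vecCons 0 (deriv rt t)) (vecCons 0 (deriv (deriv rt) t))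
    (vecCons 0 (deriv (deriv (deriv rt)) t))
  rw [← h₁, ← h₂, ← h₃, hRρ t ht, hR t, det4_mulVec, det4_vecCons_one_zero,
    det4_vecCons_one_zero, ← hR t] at hW
  rw [eq_div_iff (pow_ne_zero 4 (hR0 t ht)), hW, mul_comm]

theorem stmt_9 (A : Matrix (Fin 4) (Fin 4) ℝ) (hA : IsUnit A.det)
    (a b : ℝ) (I : Set ℝ) (hI : I = Set.Ioo a b)
    (r : ℝ → Fin 3 → ℝ)
    (hr1 : ∀ t ∈ I, DifferentiableAt ℝ r t)
    (hr2 : ∀ t ∈ I, DifferentiableAt ℝ (deriv r) t)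
    (hr3 : ∀ t ∈ I, DifferentiableAt ℝ (deriv (deriv r)) t)
    (R : ℝ → Fin 4 → ℝ)
    (hR : ∀ t, R t = A.mulVec (Matrix.vecCons 1 (r t)))
    (hR0 : ∀ t ∈ I, R t 0 ≠ 0)
    (rt : ℝ → Fin 3 → ℝ)
    (hrt : ∀ t, rt t = fun i : Fin 3 => R t i.succ / R t 0) :
    ∀ t ∈ I,
      det3 (deriv rt t) (deriv (deriv rt) t) (deriv (deriv (deriv rt)) t)
        = A.det * det3 (deriv r t) (deriv (deriv r) t) (deriv (deriv (deriv r)) t)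
            / (R t 0) ^ 4 :=
  stmt_9_general A a b I hI r hr1 hr2 hr3 R hR hR0 rt hrt
end
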